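/- For the two-agent mixed-manna instance built from positive integers e_1,...,e_m (goods with values e_j and two chores of value −(Σ_i e_i)/2 + 1/4 each, with Σ_i e_i even), the maximin share MMS over 2 bundles satisfies 0 ≤ MMS ≤ 1/4, and MMS > 0 if and only if the Partition instance {e_1,...,e_m} has a solution; moreover when a solution exists MMS = 1/4. -/

import Mathlib

open Finset
open scoped Classical

/-- `A` is a partition of the item set `M` into `n` (possibly empty) bundles. -/
def IsPartition {ι : Type*} [DecidableEq ι] (M : Finset ι) (n : ℕ)
    (A : Fin n → Finset ι) : Prop :=
  (∀ k, A k ⊆ M) ∧ (∀ k l, k ≠ l → Disjoint (A k) (A l)) ∧ (∀ j ∈ M, ∃ k, j ∈ A k)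

/-- `μ` is the maximin share of the additive valuation `v` over `M` with `n` bundles:
some partition attains minimum bundle value at least `μ`, and every partition has a
bundle of value at most `μ`. -/
def IsMMS {ι : Type*} [DecidableEq ι] (v : ι → ℝ) (M : Finset ι) (n : ℕ) (μ : ℝ) : Prop :=
  (∃ A : Fin n → Finset ι, IsPartition M n A ∧ ∀ k, μ ≤ ∑ j ∈ A k, v j) ∧
  (∀ A : Fin n → Finset ι, IsPartition M n A → ∃ k, ∑ j ∈ A k, v j ≤ μ)


/-
The whole manna is worth `1/2`, so `μ ≤ 1/4`, and splitting it into everything versus nothing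
gives `μ ≥ 0`. With `E = Σ eᵢ`, a bundle holding goods of total `s` and `k` chores is worth
`s + k (1/4 - E/2)` and its complement `1/2` minus that; both are positive only if the integer
`4s - 2kE + k` lies strictly between `0` and `2`, which forces `k = 1` and `2s = E`. Conversely,
a solution `S` together with one chore is a bundle worth exactly `1/4`, and so is its complement.
-/

theorem Fin.castAdd_ne_natAdd {m n : ℕ} (i : Fin m) (l : Fin n) :
    Fin.castAdd n i ≠ Fin.natAdd m l :=
  Fin.ne_of_lt (Fin.lt_def.mpr (by simp; omega))

section TwoBundles

variable {ι : Type*} [Fintype ι] [DecidableEq ι]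

theorem isPartition_compl (B : Finset ι) : IsPartition univ 2 ![B, Bᶜ] := by
  refine ⟨fun _ => subset_univ _, fun k l hkl => ?_, fun j _ => ?_⟩
  · fin_cases k <;> fin_cases l <;> simp_all [disjoint_compl_right, disjoint_compl_left]
  · by_cases hj : j ∈ B
    · exact ⟨0, by simpa using hj⟩
    · exact ⟨1, by simpa using hj⟩

theorem IsPartition.eq_compl {A : Fin 2 → Finset ι} (hA : IsPartition univ 2 A) :
    A 1 = (A 0)ᶜ := by
  ext j
  obtain ⟨-, hdisj, hcover⟩ := hA
  obtain ⟨k, hk⟩ := hcover j (mem_univ j)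
  have h01 := disjoint_left.mp (hdisj 0 1 (by decide))
  simp only [mem_compl]
  exact ⟨fun h1 h0 => h01 h0 h1, fun h0 => by fin_cases k <;> simp_all⟩

variable {v : ι → ℝ} {μ : ℝ}

theorem IsMMS.exists_le_compl (h : IsMMS v univ 2 μ) :
    ∃ B : Finset ι, μ ≤ ∑ j ∈ B, v j ∧ μ ≤ ∑ j ∈ Bᶜ, v j := by
  obtain ⟨⟨A, hA, hμ⟩, -⟩ := h
  exact ⟨A 0, hμ 0, hA.eq_compl ▸ hμ 1⟩

theorem IsMMS.min_le (h : IsMMS v univ 2 μ) (B : Finset ι) :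
    min (∑ j ∈ B, v j) (∑ j ∈ Bᶜ, v j) ≤ μ := by
  obtain ⟨k, hk⟩ := h.2 _ (isPartition_compl B)
  fin_cases k
  · exact (min_le_left _ _).trans hk
  · exact (min_le_right _ _).trans hk

theorem IsMMS.le_half_sum (h : IsMMS v univ 2 μ) : μ ≤ (∑ j, v j) / 2 := by
  obtain ⟨B, hB, hBc⟩ := h.exists_le_compl
  linarith [sum_add_sum_compl B v]

theorem IsMMS.nonneg (h : IsMMS v univ 2 μ) (hv : 0 ≤ ∑ j, v j) : 0 ≤ μ := by
  simpa [hv] using h.min_le ∅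

end TwoBundles

section MixedManna

variable {m : ℕ} (e : Fin m → ℕ)

noncomputable def mixedValuation : Fin (m + 2) → ℝ := fun j =>
  if h : (j : ℕ) < m then (e ⟨j, h⟩ : ℝ)
  else -((∑ i, e i : ℕ) : ℝ) / 2 + 1 / 4

theorem sum_mixedValuation (B : Finset (Fin (m + 2))) :
    ∑ j ∈ B, mixedValuation e j =
      ∑ i ∈ univ.filter (fun i => Fin.castAdd 2 i ∈ B), (e i : ℝ) +
        #(univ.filter fun l : Fin 2 => Fin.natAdd m l ∈ B) *
          (-((∑ i, e i : ℕ) : ℝ) / 2 + 1 / 4) := by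
  rw [← sum_ite_mem_eq, Fin.sum_univ_add, sum_filter, natCast_card_filter, sum_mul]
  simp [mixedValuation]

theorem sum_univ_mixedValuation : ∑ j, mixedValuation e j = 1 / 2 := by
  rw [sum_mixedValuation]
  simp only [mem_univ, filter_true, card_univ, Fintype.card_fin, Nat.cast_ofNat, Nat.cast_sum]
  ring

theorem two_mul_eq_of_pos_of_lt_half {s E k : ℕ} (hk : k ≤ 2)
    (hpos : 0 < (s : ℝ) + k * (-(E : ℝ) / 2 + 1 / 4))
    (hlt : (s : ℝ) + k * (-(E : ℝ) / 2 + 1 / 4) < 1 / 2) : 2 * s = E := by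
  have hbounds : (0 : ℤ) < 4 * s - 2 * k * E + k ∧ (4 * s - 2 * k * E + k : ℤ) < 2 := by
    constructor
    · exact_mod_cast (by linarith : (0 : ℝ) < 4 * s - 2 * k * E + k)
    · exact_mod_cast (by linarith : (4 * s - 2 * k * E + k : ℝ) < 2)
  interval_cases k <;> omega

theorem exists_two_mul_sum_eq_of_pos {B : Finset (Fin (m + 2))}
    (hB : 0 < ∑ j ∈ B, mixedValuation e j) (hBc : 0 < ∑ j ∈ Bᶜ, mixedValuation e j) :
    ∃ S : Finset (Fin m), 2 * ∑ i ∈ S, e i = ∑ i, e i := by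
  have hcompl := sum_add_sum_compl B (mixedValuation e)
  rw [sum_univ_mixedValuation] at hcompl
  rw [sum_mixedValuation] at hB hcompl
  set k := #(univ.filter fun l : Fin 2 => Fin.natAdd m l ∈ B)
  have hk : k ≤ 2 := (card_le_univ _).trans_eq (Fintype.card_fin 2)
  push_cast at hB hcompl
  exact ⟨univ.filter (fun i => Fin.castAdd 2 i ∈ B),
    two_mul_eq_of_pos_of_lt_half hk (by push_cast; linarith) (by push_cast; linarith)⟩

theorem exists_sum_mixedValuation_eq_quarter {S : Finset (Fin m)}
    (hS : 2 * ∑ i ∈ S, e i = ∑ i, e i) :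
    ∃ B : Finset (Fin (m + 2)),
      ∑ j ∈ B, mixedValuation e j = 1 / 4 ∧ ∑ j ∈ Bᶜ, mixedValuation e j = 1 / 4 := by
  set B := S.map (Fin.castAddEmb 2) ∪ {Fin.natAdd m 0}
  have hgoods : univ.filter (fun i => Fin.castAdd 2 i ∈ B) = S := by
    ext i
    simp [B, Fin.castAdd_ne_natAdd]
  have hchores : univ.filter (fun l : Fin 2 => Fin.natAdd m l ∈ B) = {0} := by
    ext l
    simp [B, Fin.castAdd_ne_natAdd]
  have hB : ∑ j ∈ B, mixedValuation e j = 1 / 4 := by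
    rw [sum_mixedValuation, hgoods, hchores, card_singleton, ← hS]
    push_cast
    ring
  refine ⟨B, hB, ?_⟩
  linarith [sum_add_sum_compl B (mixedValuation e), sum_univ_mixedValuation e]

end MixedManna

theorem mms_iff_partition_general (m : ℕ) (e : Fin m → ℕ)
    (μ : ℝ)
    (hMMS : IsMMS
      (fun j : Fin (m + 2) =>
        if h : (j : ℕ) < m then (e ⟨j, h⟩ : ℝ)
        else -((∑ i, e i : ℕ) : ℝ) / 2 + 1 / 4)
      Finset.univ 2 μ) :
    0 ≤ μ ∧ μ ≤ 1 / 4 ∧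
    (0 < μ ↔ ∃ S : Finset (Fin m), 2 * ∑ i ∈ S, e i = ∑ i, e i) ∧
    ((∃ S : Finset (Fin m), 2 * ∑ i ∈ S, e i = ∑ i, e i) → μ = 1 / 4) := by
  have h : IsMMS (mixedValuation e) univ 2 μ := hMMS
  have htotal := sum_univ_mixedValuation e
  have hle : μ ≤ 1 / 4 := by linarith [h.le_half_sum]
  have hquarter : (∃ S : Finset (Fin m), 2 * ∑ i ∈ S, e i = ∑ i, e i) → μ = 1 / 4 := by
    rintro ⟨S, hS⟩
    obtain ⟨B, hB, hBc⟩ := exists_sum_mixedValuation_eq_quarter e hS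
    exact le_antisymm hle (by simpa [hB, hBc] using h.min_le B)
  refine ⟨h.nonneg (by rw [htotal]; norm_num), hle,
    ⟨fun hpos => ?_, fun hS => by rw [hquarter hS]; norm_num⟩, hquarter⟩
  obtain ⟨B, hB, hBc⟩ := h.exists_le_compl
  exact exists_two_mul_sum_eq_of_pos e (hpos.trans_le hB) (hpos.trans_le hBc)

/-- For the two-agent mixed manna instance with goods `e_1,...,e_m` (positive integers
with even sum) and two chores of value `-(Σ e)/2 + 1/4` each, the maximin share `μ`
satisfies `0 ≤ μ ≤ 1/4`; moreover `μ > 0` iff the Partition instance has a solution,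
and when a solution exists `μ = 1/4`. -/
theorem mms_iff_partition (m : ℕ) (e : Fin m → ℕ)
    (hpos : ∀ i, 0 < e i) (heven : 2 ∣ ∑ i, e i)
    (μ : ℝ)
    (hMMS : IsMMS
      (fun j : Fin (m + 2) =>
        if h : (j : ℕ) < m then (e ⟨j, h⟩ : ℝ)
        else -((∑ i, e i : ℕ) : ℝ) / 2 + 1 / 4)
      Finset.univ 2 μ) :
    0 ≤ μ ∧ μ ≤ 1 / 4 ∧
    (0 < μ ↔ ∃ S : Finset (Fin m), 2 * ∑ i ∈ S, e i = ∑ i, e i) ∧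
    ((∃ S : Finset (Fin m), 2 * ∑ i ∈ S, e i = ∑ i, e i) → μ = 1 / 4) :=
  mms_iff_partition_general m e μ hMMS
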